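/- Let n ≥ 1, c ∈ ℤ^n with c ≥ 0, f ∈ F(c), and i ∈ {1,…,n}, and suppose ε̃_i(j′) > 0 for some j′. Then there exists a multinode V_i(j) with ε̃_i(j) > 0 and ε̃_i(q) = 0 for all q > j, and the function obtained from f by adding 1 to its value at the switch-node of this multinode V_i(j) is again feasible (i.e. φ_i(f) ∈ F(c)). -/
import Mathlib


open scoped Classical

namespace CrystalA

/-- A node `(i, k, j)` of the (extended) supporting graph stands for `v_i^k(j)`. -/
abbrev Node : Type := ℕ × ℕ × ℕ

/-- Membership in the supporting graph `G`:
`1 ≤ j ≤ i ≤ n` and `i - j + 1 ≤ k ≤ n - j + 1`. -/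
def IsNode (n : ℕ) (v : Node) : Prop :=
  1 ≤ v.2.2 ∧ v.2.2 ≤ v.1 ∧ v.1 ≤ n ∧ v.1 + 1 ≤ v.2.1 + v.2.2 ∧ v.2.1 + v.2.2 ≤ n + 1

/-- Membership in the extended graph `Ḡ`: `0 ≤ j ≤ n`, `j ≤ i ≤ n + 1`, `1 ≤ k ≤ n`. -/
def IsExtNode (n : ℕ) (v : Node) : Prop :=
  v.2.2 ≤ n ∧ v.2.2 ≤ v.1 ∧ v.1 ≤ n + 1 ∧ 1 ≤ v.2.1 ∧ v.2.1 ≤ n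

/-- Ascending step `v_i^k(j) → v_{i-1}^k(j)`. -/
def Asc (u w : Node) : Prop := u.2.1 = w.2.1 ∧ u.2.2 = w.2.2 ∧ u.1 = w.1 + 1

/-- Descending step `v_i^k(j) → v_{i+1}^k(j+1)`. -/
def Desc (u w : Node) : Prop := u.2.1 = w.2.1 ∧ w.2.2 = u.2.2 + 1 ∧ w.1 = u.1 + 1

/-- Edges of the supporting graph `G`. -/
def GEdge (n : ℕ) (u w : Node) : Prop := IsNode n u ∧ IsNode n w ∧ (Asc u w ∨ Desc u w)

/-- Edges of the extended graph `Ḡ`. -/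
def ExtEdge (n : ℕ) (u w : Node) : Prop := IsExtNode n u ∧ IsExtNode n w ∧ (Asc u w ∨ Desc u w)

/-- The extension of `f : V(G) → ℤ` to `Ḡ`: on an extra node it takes value `c_k`
if there is a directed path in `Ḡ^k` from it to a node of `G^k`, and `0` otherwise. -/
noncomputable def ext (n : ℕ) (c : ℕ → ℤ) (f : Node → ℤ) (v : Node) : ℤ :=
  if IsNode n v then f v
  else if ∃ w, IsNode n w ∧ Relation.ReflTransGen (ExtEdge n) v w then c v.2.1 else 0

/-- Increment `∂f` of (the extension of) `f` on the edge `(u, w)`. -/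
noncomputable def dP (n : ℕ) (c : ℕ → ℤ) (f : Node → ℤ) (u w : Node) : ℤ :=
  ext n c f u - ext n c f w

/-- Head of the SE-edge of `v = v_i^k(j)`, namely `v_{i+1}^k(j+1)`. -/
def seNode (v : Node) : Node := (v.1 + 1, v.2.1, v.2.2 + 1)

/-- Tail of the SW-edge of `v = v_i^k(j)`, namely `v_{i+1}^k(j)`. -/
def swNode (v : Node) : Node := (v.1 + 1, v.2.1, v.2.2)

/-- Tail of the NW-edge of `v = v_i^k(j)`, namely `v_{i-1}^k(j-1)`. -/
def nwNode (v : Node) : Node := (v.1 - 1, v.2.1, v.2.2 - 1)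

/-- The SE-edge of `v` is tight for `f`. -/
def SEtight (n : ℕ) (c : ℕ → ℤ) (f : Node → ℤ) (v : Node) : Prop :=
  dP n c f v (seNode v) = 0

/-- The SW-edge of `v` is tight for `f`. -/
def SWtight (n : ℕ) (c : ℕ → ℤ) (f : Node → ℤ) (v : Node) : Prop :=
  dP n c f (swNode v) v = 0

/-- The node `v_i^k(j)` has the switch property in the multinode `V_i(j)`:
SE-edges of preceding nodes are tight and SW-edges of succeeding nodes are tight. -/
def SwitchAt (n : ℕ) (c : ℕ → ℤ) (f : Node → ℤ) (i j k : ℕ) : Prop :=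
  (∀ k', i + 1 ≤ k' + j → k' < k → SEtight n c f (i, k', j)) ∧
  (∀ k', k < k' → k' + j ≤ n + 1 → SWtight n c f (i, k', j))

/-- Feasible functions of the crossing model (normalized to vanish off `G`). -/
def Feasible (n : ℕ) (c : ℕ → ℤ) (f : Node → ℤ) : Prop :=
  (∀ u w, GEdge n u w → 0 ≤ f u - f w) ∧
  (∀ v, IsNode n v → 0 ≤ f v ∧ f v ≤ c v.2.1) ∧
  (∀ i j, 1 ≤ j → j ≤ i → i ≤ n → ∃ k, i + 1 ≤ k + j ∧ k + j ≤ n + 1 ∧ SwitchAt n c f i j k) ∧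
  (∀ v, ¬ IsNode n v → f v = 0)

/-- `v_i^k(j)` is the switch-node of the multinode `V_i(j)`: the first node
with the switch property. -/
def IsSwitchNode (n : ℕ) (c : ℕ → ℤ) (f : Node → ℤ) (i j k : ℕ) : Prop :=
  i + 1 ≤ k + j ∧ k + j ≤ n + 1 ∧ SwitchAt n c f i j k ∧
  ∀ k', i + 1 ≤ k' + j → SwitchAt n c f i j k' → k ≤ k'

/-- The slack `ε(v)` at a node `v = v_i^k(j)`. -/
noncomputable def slack (n : ℕ) (c : ℕ → ℤ) (f : Node → ℤ) (v : Node) : ℤ :=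
  dP n c f (nwNode v) v - dP n c f (v.1, v.2.1, v.2.2 - 1) (v.1 + 1, v.2.1, v.2.2)

/-- The total slack `ε_i(j)` at the multinode `V_i(j)`. -/
noncomputable def epsSum (n : ℕ) (c : ℕ → ℤ) (f : Node → ℤ) (i j : ℕ) : ℤ :=
  ∑ k ∈ Finset.Icc (i + 1 - j) (n + 1 - j), slack n c f (i, k, j)

/-- `ε_i(p, j) = ε_i(p) + ⋯ + ε_i(j)`. -/
noncomputable def epsInt (n : ℕ) (c : ℕ → ℤ) (f : Node → ℤ) (i p j : ℕ) : ℤ :=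
  ∑ q ∈ Finset.Icc p j, epsSum n c f i q

/-- The reduced slack `ε̃_i(j)`. -/
noncomputable def redSlack (n : ℕ) (c : ℕ → ℤ) (f : Node → ℤ) (i j : ℕ) : ℤ :=
  if h : (Finset.Icc 1 j).Nonempty
  then max 0 ((Finset.Icc 1 j).inf' h fun p => epsInt n c f i p j)
  else 0

/-- `V_i(j)` is the active multinode for `f` and color `i`. -/
def Active (n : ℕ) (c : ℕ → ℤ) (f : Node → ℤ) (i j : ℕ) : Prop :=
  1 ≤ j ∧ j ≤ i ∧ 0 < redSlack n c f i j ∧ ∀ q, j < q → q ≤ i → redSlack n c f i q = 0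

/-- The edge relation of color `i` of the crystal graph `K(c)`:
`g = φ_i(f)` with `f, g` feasible. -/
def Move (n : ℕ) (c : ℕ → ℤ) (i : ℕ) (f g : Node → ℤ) : Prop :=
  Feasible n c f ∧ Feasible n c g ∧ 1 ≤ i ∧ i ≤ n ∧
  ∃ j k, Active n c f i j ∧ IsSwitchNode n c f i j k ∧
    g = Function.update f (i, k, j) (f (i, k, j) + 1)

/-- `SeqRel n c L f g`: applying the operators `F_i` for `i ∈ L` (head first)
to `f` is defined and yields `g`. -/
def SeqRel (n : ℕ) (c : ℕ → ℤ) : List ℕ → (Node → ℤ) → (Node → ℤ) → Prop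
  | [], f, g => f = g
  | i :: L, f, g => ∃ h, Move n c i f h ∧ SeqRel n c L h g

/-- The substring `w_{m,k,j} = F_j F_{j+1} ⋯ F_{j+k-1}` (rightmost applied first),
as a list of colors in order of application. -/
def wList (k j : ℕ) : List ℕ := (List.range k).map fun t => j + k - 1 - t

/-- The operator string `S_{m,k} = w_{m,k,m-k+1} ⋯ w_{m,k,2} w_{m,k,1}`
as a list of colors in order of application. -/
def sList (m k : ℕ) : List ℕ := ((List.range (m - k + 1)).map fun t => wList k (t + 1)).flatten

/-- The `p`-th power `S_{m,k}^p` as a list of colors in order of application. -/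
def sPow (m k p : ℕ) : List ℕ := (List.replicate p (sList m k)).flatten

/-- The composite `S_{m,kmax}^{p kmax} ∘ ⋯ ∘ S_{m,1}^{p 1}` as a list of colors
in order of application. -/
def sPowChain (m : ℕ) (p : ℕ → ℕ) (kmax : ℕ) : List ℕ :=
  ((List.range kmax).map fun t => sPow m (t + 1) (p (t + 1))).flatten

/-- Replacing each operator `F_j` by `F_{j+1}` in a string. -/
def shiftList (L : List ℕ) : List ℕ := L.map (· + 1)

/-- The string `T_m` obtained from `S_{n-1,m-1}` by replacing each `F_j` by `F_{j+1}`. -/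
def tList (n m : ℕ) : List ℕ := shiftList (sList (n - 1) (m - 1))

/-- The composite `T_n^{q n} ∘ ⋯ ∘ T_2^{q 2}` as a list of colors in order of application. -/
def tChain (n : ℕ) (q : ℕ → ℕ) : List ℕ :=
  ((List.range (n - 1)).map fun t => (List.replicate (q (t + 2)) (tList n (t + 2))).flatten).flatten

/-- The principal function `f[a]`, constant `a_k` on `G^k`. -/
noncomputable def principal (n : ℕ) (a : ℕ → ℤ) : Node → ℤ := fun v =>
  if IsNode n v then a v.2.1 else 0

/-- One (undirected) step in the subgraph of `K(c)` with colors `lo, …, hi`. -/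
def ColsStep (n : ℕ) (c : ℕ → ℤ) (lo hi : ℕ) (f g : Node → ℤ) : Prop :=
  ∃ i, lo ≤ i ∧ i ≤ hi ∧ (Move n c i f g ∨ Move n c i g f)

/-- `f` and `g` lie in the same connected component of the subgraph of `K(c)`
formed by all vertices and the edges of colors `lo, …, hi`. -/
def SameComp (n : ℕ) (c : ℕ → ℤ) (lo hi : ℕ) (f g : Node → ℤ) : Prop :=
  Relation.ReflTransGen (ColsStep n c lo hi) f g

/-- Reachability by directed paths in `K(c)`. -/
def Reach (n : ℕ) (c : ℕ → ℤ) (f g : Node → ℤ) : Prop :=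
  Relation.ReflTransGen (fun x y => ∃ i, Move n c i x y) f g

/-- The function `f_{a,Δ}` (with the renaming `x_m(j) = v_{m+j-1}^k(j)`, `m = i - j + 1`). -/
noncomputable def fDelta (n : ℕ) (a Δ : ℕ → ℤ) : Node → ℤ := fun v =>
  if IsNode n v then
    (let k := v.2.1
     let j := v.2.2
     let m := v.1 + 1 - v.2.2
     if m = k then (if j = n - k + 1 then a k else a k + max (Δ k) 0)
     else if j = n - k + 1 then a k + min (Δ (k - 1)) 0
     else a k + max (Δ k) 0 + min (Δ (k - 1)) 0)
  else 0

/-! ### Crystal axioms -/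

/-- `h_i(v)`: the number of edges of the maximal `i`-colored path starting at `v`. -/
noncomputable def headLen {V : Type*} (E : ℕ → V → V → Prop) (i : ℕ) (v : V) : ℕ :=
  sSup {m | ∃ g : ℕ → V, g 0 = v ∧ ∀ l, l < m → E i (g l) (g (l + 1))}

/-- `t_i(v)`: the number of edges of the maximal `i`-colored path ending at `v`. -/
noncomputable def tailLen {V : Type*} (E : ℕ → V → V → Prop) (i : ℕ) (v : V) : ℕ :=
  sSup {m | ∃ g : ℕ → V, g m = v ∧ ∀ l, l < m → E i (g l) (g (l + 1))}

/-- The label `ℓ_j(e) = h_j(v) - h_j(u)` of an edge `e = (u, v)` w.r.t. color `j`. -/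
noncomputable def lab {V : Type*} (E : ℕ → V → V → Prop) (j : ℕ) (u v : V) : ℤ :=
  (headLen E j v : ℤ) - (headLen E j u : ℤ)

/-- Neighboring colors: `|i - j| = 1`. -/
def Nbr (i j : ℕ) : Prop := i = j + 1 ∨ j = i + 1

/-- Distant colors: `|i - j| ≥ 2`. -/
def Dist (i j : ℕ) : Prop := i + 2 ≤ j ∨ j + 2 ≤ i

/-- The (regular) `A_n`-crystal axioms for an `n`-colored digraph with edge
relations `E i` (`i` the color). -/
structure IsAnCrystal (n : ℕ) {V : Type*} (E : ℕ → V → V → Prop) : Prop where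
  colorBound : ∀ i u v, E i u v → 1 ≤ i ∧ i ≤ n
  connected : ∀ u v : V, Relation.ReflTransGen (fun x y => ∃ i, E i x y ∨ E i y x) u v
  outFun : ∀ i u v v', E i u v → E i u v' → v = v'
  inFun : ∀ i u u' v, E i u v → E i u' v → u = u'
  a1 : ∀ i v, ∃ (t h : ℕ) (g : ℕ → V), g t = v ∧ (∀ m, m < t + h → E i (g m) (g (m + 1))) ∧
      (∀ m m', m ≤ t + h → m' ≤ t + h → g m = g m' → m = m') ∧
      (¬ ∃ u, E i u (g 0)) ∧ (¬ ∃ w, E i (g (t + h)) w)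
  a2_tail : ∀ i j u v, E i u v → 1 ≤ j → j ≤ n → j ≠ i → tailLen E j v ≤ tailLen E j u
  a2_head : ∀ i j u v, E i u v → 1 ≤ j → j ≤ n → j ≠ i → headLen E j u ≤ headLen E j v
  a2_diff : ∀ i j u v, E i u v → 1 ≤ j → j ≤ n → j ≠ i →
      ((headLen E j u : ℤ) - (tailLen E j u : ℤ)) - ((headLen E j v : ℤ) - (tailLen E j v : ℤ))
        = if Nbr i j then -1 else 0
  a2_convex : ∀ i j u v w, E i u v → E i v w → 1 ≤ j → j ≤ n → j ≠ i →
      2 * headLen E j v ≤ headLen E j u + headLen E j w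
  a3_fwd : ∀ i j u v v', Nbr i j → E i u v → E j u v' → lab E j u v = 0 →
      lab E i u v' = 1 ∧ ∃ w, E i v' w ∧ E j v w
  a3_bwd : ∀ i j u u' v, Nbr i j → E i u v → E j u' v → lab E j u v = 1 →
      lab E i u' v = 0 ∧ ∃ w, E i w u' ∧ E j w u
  a4_fwd : ∀ i j u v v', Nbr i j → E i u v → E j u v' → lab E j u v = 1 → lab E i u v' = 1 →
      ∃ w x2 x3 y2 y3, E j v x2 ∧ E j x2 x3 ∧ E i x3 w ∧ E i v' y2 ∧ E i y2 y3 ∧ E j y3 w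
  a4_bwd : ∀ i j u u' v, Nbr i j → E i u v → E j u' v → lab E j u v = 0 → lab E i u' v = 0 →
      ∃ w x2 x3 y2 y3, E j x2 u ∧ E j x3 x2 ∧ E i w x3 ∧ E i y2 u' ∧ E i y3 y2 ∧ E j w y3
  a5_ff : ∀ i j v x w y w', Dist i j → E j v x → E i x w → E i v y → E j y w' → w = w'
  a5_fb : ∀ i j v x w y w', Dist i j → E j x v → E i x w → E i v y → E j w' y → w = w'
  a5_bb : ∀ i j v x w y w', Dist i j → E j x v → E i w x → E i y v → E j w' y → w = w'


section Proofs

variable {n : ℕ} {c : ℕ → ℤ} {f : Node → ℤ}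

lemma IsNode.isExt {v : Node} (h : IsNode n v) : IsExtNode n v := by
  obtain ⟨h1, h2, h3, h4, h5⟩ := h
  exact ⟨h2.trans h3, h2, h3.trans (by omega), by omega, by omega⟩

/-- Reachability to `G` used in `ext`. -/
abbrev Reaches (n : ℕ) (v : Node) : Prop :=
  ∃ w, IsNode n w ∧ Relation.ReflTransGen (ExtEdge n) v w

lemma ext_node {v : Node} (h : IsNode n v) : ext n c f v = f v := if_pos h

lemma isNode_iff {i k j : ℕ} :
    IsNode n (i, k, j) ↔ 1 ≤ j ∧ j ≤ i ∧ i ≤ n ∧ i + 1 ≤ k + j ∧ k + j ≤ n + 1 := Iff.rfl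

lemma isExt_iff {i k j : ℕ} :
    IsExtNode n (i, k, j) ↔ j ≤ n ∧ j ≤ i ∧ i ≤ n + 1 ∧ 1 ≤ k ∧ k ≤ n := Iff.rfl

lemma ext_eq_c {v : Node} (hv : ¬ IsNode n v) (hr : Reaches n v) :
    ext n c f v = c v.2.1 := by
  unfold ext; rw [if_neg hv, if_pos hr]

lemma ext_eq_zero {v : Node} (hv : ¬ IsNode n v) (hr : ¬ Reaches n v) :
    ext n c f v = 0 := by
  unfold ext; rw [if_neg hv, if_neg hr]

lemma ext_update {v y : Node} (hv : IsNode n v) (x : ℤ) :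
    ext n c (Function.update f v x) y = if y = v then x else ext n c f y := by
  by_cases hy : y = v
  · subst hy; rw [if_pos rfl]; unfold ext; rw [if_pos hv, Function.update_self]
  · rw [if_neg hy]; unfold ext
    rw [Function.update_of_ne hy]

lemma sum_invariant {v w : Node} (h : Relation.ReflTransGen (ExtEdge n) v w)
    (hv : n + 2 ≤ v.2.1 + v.2.2) : n + 2 ≤ w.2.1 + w.2.2 := by
  induction h with
  | refl => exact hv
  | tail _ e ih =>
    obtain ⟨_, _, he⟩ := e
    rcases he with ⟨e1, e2, e3⟩ | ⟨e1, e2, e3⟩ <;> omega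

lemma not_reaches_sum {v : Node} (hv : n + 2 ≤ v.2.1 + v.2.2) : ¬ Reaches n v := by
  rintro ⟨w, hw, hp⟩
  have h1 := sum_invariant hp hv
  have h2 := hw.2.2.2.2
  omega

lemma left_invariant {v w : Node} (h : Relation.ReflTransGen (ExtEdge n) v w)
    (hv : v.1 + 1 ≤ v.2.2) : w.1 + 1 ≤ w.2.2 := by
  induction h with
  | refl => exact hv
  | tail _ e ih =>
    obtain ⟨_, _, he⟩ := e
    rcases he with ⟨e1, e2, e3⟩ | ⟨e1, e2, e3⟩ <;> omega

lemma not_reaches_left {v : Node} (hv : v.1 + 1 ≤ v.2.2) : ¬ Reaches n v := by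
  rintro ⟨w, hw, hp⟩
  have h1 := left_invariant hp hv
  have h2 := hw.2.1
  omega

lemma chain_row0 {κ : ℕ} (hκ1 : 1 ≤ κ) (hκn : κ ≤ n) :
    ∀ x, x ≤ n + 1 → Relation.ReflTransGen (ExtEdge n) (x, κ, 0) (0, κ, 0) := by
  intro x
  induction x with
  | zero => intro _; exact Relation.ReflTransGen.refl
  | succ x ih =>
    intro hx
    refine Relation.ReflTransGen.head ?_ (ih (by omega))
    exact ⟨isExt_iff.mpr (by omega), isExt_iff.mpr (by omega), Or.inl ⟨rfl, rfl, rfl⟩⟩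

lemma reaches_row0 {x κ : ℕ} (hx : x ≤ n + 1) (hκ1 : 1 ≤ κ) (hκn : κ ≤ n) :
    Reaches n (x, κ, 0) := by
  refine ⟨(1, κ, 1), isNode_iff.mpr (by omega), ?_⟩
  refine Relation.ReflTransGen.tail (chain_row0 hκ1 hκn x hx) ?_
  exact ⟨isExt_iff.mpr (by omega), isExt_iff.mpr (by omega), Or.inr ⟨rfl, rfl, rfl⟩⟩

lemma ext_row0 {x κ : ℕ} (hx : x ≤ n + 1) (hκ1 : 1 ≤ κ) (hκn : κ ≤ n) :
    ext n c f (x, κ, 0) = c κ :=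
  ext_eq_c (fun h => by have := isNode_iff.mp h; omega) (reaches_row0 hx hκ1 hκn)

lemma reaches_gap1 {k j : ℕ} (hj : 1 ≤ j) (hk : 1 ≤ k) (hkj : k + j ≤ n + 1) :
    Reaches n (k + j, k, j) := by
  refine ⟨(k + j - 1, k, j), isNode_iff.mpr (by omega), ?_⟩
  refine Relation.ReflTransGen.single ?_
  exact ⟨isExt_iff.mpr (by omega), isExt_iff.mpr (by omega), Or.inl ⟨rfl, rfl, by omega⟩⟩

lemma ext_gap1 {k j : ℕ} (hj : 1 ≤ j) (hk : 1 ≤ k) (hkj : k + j ≤ n + 1) :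
    ext n c f (k + j, k, j) = c k :=
  ext_eq_c (fun h => by have := isNode_iff.mp h; omega) (reaches_gap1 hj hk hkj)

/-- Monotonicity of `ext` along ascending/descending steps. -/
lemma extMono (hf : Feasible n c f) (hc : ∀ k, 1 ≤ k → k ≤ n → 0 ≤ c k)
    {u w : Node} (hu : IsExtNode n u) (h : Asc u w ∨ Desc u w) :
    ext n c f w ≤ ext n c f u := by
  obtain ⟨ui, uk, uj⟩ := u
  obtain ⟨wi, wk, wj⟩ := w
  obtain ⟨hu1, hu2, hu3, hu4, hu5⟩ := hu
  simp only at hu1 hu2 hu3 hu4 hu5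
  have hkk : uk = wk := by rcases h with ⟨e, -⟩ | ⟨e, -⟩ <;> exact e
  subst hkk
  by_cases hnu : IsNode n (ui, uk, uj)
  · have hg := isNode_iff.mp hnu
    by_cases hnw : IsNode n (wi, uk, wj)
    · rw [ext_node hnu, ext_node hnw]
      have := hf.1 _ _ ⟨hnu, hnw, h⟩
      omega
    · rw [ext_node hnu]
      rw [ext_eq_zero hnw ?_]
      · exact (hf.2.1 _ hnu).1
      · rcases h with ⟨e1, e2, e3⟩ | ⟨e1, e2, e3⟩
        · -- ascending: w = (ui-1, uk, uj); not a node forces uj ≥ wi + 1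
          simp only at e1 e2 e3
          refine not_reaches_left ?_
          simp only
          have : ¬ (wj ≤ wi) := fun hle => hnw (isNode_iff.mpr (by omega))
          omega
        · simp only at e1 e2 e3
          refine not_reaches_sum ?_
          simp only
          have : ¬ (wi ≤ n ∧ uk + wj ≤ n + 1) :=
            fun hab => hnw (isNode_iff.mpr (by omega))
          omega
  · by_cases hr : Reaches n (ui, uk, uj)
    · rw [ext_eq_c hnu hr]
      by_cases hnw : IsNode n (wi, uk, wj)
      · rw [ext_node hnw]
        have := (hf.2.1 _ hnw).2
        simp only at this ⊢
        omega
      · by_cases hrw : Reaches n (wi, uk, wj)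
        · rw [ext_eq_c hnw hrw]
        · rw [ext_eq_zero hnw hrw]; exact hc uk hu4 hu5
    · by_cases hnw : IsNode n (wi, uk, wj)
      · exact absurd ⟨_, hnw, Relation.ReflTransGen.single
          ⟨⟨hu1, hu2, hu3, hu4, hu5⟩, hnw.isExt, h⟩⟩ hr
      · rw [ext_eq_zero hnu hr, ext_eq_zero hnw ?_]
        rintro ⟨w0, hw0, hp⟩
        rcases (Relation.ReflTransGen.cases_head hp) with rfl | ⟨x, hx, -⟩
        · exact hnw hw0
        · exact hr ⟨w0, hw0, Relation.ReflTransGen.head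
            ⟨⟨hu1, hu2, hu3, hu4, hu5⟩, hx.1, h⟩ hp⟩

end Proofs
section Claims

variable {n : ℕ} {c : ℕ → ℤ} {f : Node → ℤ}

lemma SEtight_eq {i k j : ℕ} (h : SEtight n c f (i, k, j)) :
    ext n c f (i, k, j) = ext n c f (i + 1, k, j + 1) := by
  have h' : ext n c f (i, k, j) - ext n c f (i + 1, k, j + 1) = 0 := h
  omega

lemma SEtight_of_eq {i k j : ℕ} (h : ext n c f (i, k, j) = ext n c f (i + 1, k, j + 1)) :
    SEtight n c f (i, k, j) := by
  show ext n c f (i, k, j) - ext n c f (i + 1, k, j + 1) = 0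
  omega

lemma SWtight_eq {i k j : ℕ} (h : SWtight n c f (i, k, j)) :
    ext n c f (i + 1, k, j) = ext n c f (i, k, j) := by
  have h' : ext n c f (i + 1, k, j) - ext n c f (i, k, j) = 0 := h
  omega

lemma SWtight_of_eq {i k j : ℕ} (h : ext n c f (i + 1, k, j) = ext n c f (i, k, j)) :
    SWtight n c f (i, k, j) := by
  show ext n c f (i + 1, k, j) - ext n c f (i, k, j) = 0
  omega

lemma slack_eq {i k j : ℕ} :
    slack n c f (i, k, j) =
      (ext n c f (i - 1, k, j - 1) - ext n c f (i, k, j)) -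
        (ext n c f (i, k, j - 1) - ext n c f (i + 1, k, j)) := rfl

lemma mono_desc (hf : Feasible n c f) (hc : ∀ k, 1 ≤ k → k ≤ n → 0 ≤ c k)
    {i k j : ℕ} (hu : IsExtNode n (i, k, j)) :
    ext n c f (i + 1, k, j + 1) ≤ ext n c f (i, k, j) :=
  extMono hf hc hu (Or.inr ⟨rfl, rfl, rfl⟩)

lemma mono_asc (hf : Feasible n c f) (hc : ∀ k, 1 ≤ k → k ≤ n → 0 ≤ c k)
    {i k j : ℕ} (hu : IsExtNode n (i + 1, k, j)) :
    ext n c f (i, k, j) ≤ ext n c f (i + 1, k, j) :=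
  extMono hf hc hu (Or.inl ⟨rfl, rfl, rfl⟩)

/-- Claim B for a non-initial switch node: the SW-edge of the switch node is non-tight. -/
lemma sw_strict (hf : Feasible n c f) (hc : ∀ k, 1 ≤ k → k ≤ n → 0 ≤ c k)
    {i j k : ℕ} (hj1 : 1 ≤ j) (hji : j ≤ i) (hin : i ≤ n)
    (hsw : IsSwitchNode n c f i j k) (hkm : i + 1 < k + j) :
    ext n c f (i, k, j) + 1 ≤ ext n c f (i + 1, k, j) := by
  obtain ⟨hk1, hk2, ⟨hSE, hSW⟩, hmin⟩ := hsw
  have hnot : ¬ SwitchAt n c f i j (k - 1) := by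
    intro hs
    have := hmin (k - 1) (by omega) hs
    omega
  have hnot2 : ¬ (∀ k', k - 1 < k' → k' + j ≤ n + 1 → SWtight n c f (i, k', j)) := by
    intro h2
    exact hnot ⟨fun k' h1' h2' => hSE k' h1' (by omega), h2⟩
  push_neg at hnot2
  obtain ⟨k', h1', h2', h3'⟩ := hnot2
  have hk'k : k' = k := by
    by_contra hne
    exact h3' (hSW k' (by omega) h2')
  subst hk'k
  have hmono : ext n c f (i, k', j) ≤ ext n c f (i + 1, k', j) :=
    mono_asc hf hc (isExt_iff.mpr (by omega))
  have hneq : ext n c f (i + 1, k', j) - ext n c f (i, k', j) ≠ 0 := h3'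
  omega

/-- The NW tail of the switch node is bounded by `c k`. -/
lemma a_le_c (hf : Feasible n c f)
    {i j k : ℕ} (hj1 : 1 ≤ j) (hji : j ≤ i) (hin : i ≤ n)
    (hk1 : i + 1 ≤ k + j) (hk2 : k + j ≤ n + 1) :
    ext n c f (i - 1, k, j - 1) ≤ c k := by
  rcases Nat.lt_or_ge j 2 with hj | hj
  · have hj' : j = 1 := by omega
    subst hj'
    rw [show (1 : ℕ) - 1 = 0 from rfl, ext_row0 (by omega) (by omega) (by omega)]
  · have hnode : IsNode n (i - 1, k, j - 1) := isNode_iff.mpr (by omega)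
    rw [ext_node hnode]
    exact (hf.2.1 _ hnode).2

/-- Claim A: if `ε_i(j) > 0` then the NW-edge of the switch node has slack ≥ 1. -/
lemma claimA (hf : Feasible n c f) (hc : ∀ k, 1 ≤ k → k ≤ n → 0 ≤ c k)
    {i j k : ℕ} (hj1 : 1 ≤ j) (hji : j ≤ i) (hin : i ≤ n)
    (hsw : IsSwitchNode n c f i j k) (hpos : 0 < epsSum n c f i j) :
    ext n c f (i, k, j) + 1 ≤ ext n c f (i - 1, k, j - 1) := by
  obtain ⟨hk1, hk2, ⟨hSE, hSW⟩, hmin⟩ := hsw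
  by_contra hA
  push_neg at hA
  have haege : ext n c f (i, k, j) ≤ ext n c f (i - 1, k, j - 1) := by
    have := mono_desc hf hc (f := f) (i := i - 1) (k := k) (j := j - 1)
      (isExt_iff.mpr (by omega))
    rw [show i - 1 + 1 = i from by omega, show j - 1 + 1 = j from by omega] at this
    exact this
  have hab : ext n c f (i - 1, k, j - 1) = ext n c f (i, k, j) := by omega
  -- per-column facts for columns (strictly) below k : a_κ = b_κ
  have hbelow : ∀ κ, i + 1 ≤ κ + j → κ < k →
      ext n c f (i - 1, κ, j - 1) = ext n c f (i, κ, j) := by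
    intro κ hκ1 hκ2
    -- k is not the first column, so the SW edge at k is non-tight
    have hsb := sw_strict hf hc hj1 hji hin ⟨hk1, hk2, ⟨hSE, hSW⟩, hmin⟩ (by omega)
    have hls : ext n c f (i + 1, k, j) ≤ ext n c f (i, k, j - 1) := by
      have := mono_desc hf hc (f := f) (i := i) (k := k) (j := j - 1)
        (isExt_iff.mpr (by omega))
      rw [show j - 1 + 1 = j from by omega] at this
      exact this
    rcases Nat.lt_or_ge j 2 with hj | hj
    · -- j = 1 : direct contradiction
      exfalso
      have hj' : j = 1 := by omega
      subst hj'
      have hl : ext n c f (i, k, 1 - 1) = c k := ext_row0 (by omega) (by omega) (by omega)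
      have ha : ext n c f (i - 1, k, 1 - 1) = c k := ext_row0 (by omega) (by omega) (by omega)
      omega
    · -- j ≥ 2 : use the multinode V_{i-1}(j-1)
      obtain ⟨k'', hk''1, hk''2, hSE'', hSW''⟩ :=
        hf.2.2.1 (i - 1) (j - 1) (by omega) (by omega) (by omega)
      have hkk'' : k ≤ k'' := by
        by_contra hgt
        have hsww := SWtight_eq (hSW'' k (by omega) (by omega))
        rw [show i - 1 + 1 = i from by omega] at hsww
        omega
      have := SEtight_eq (hSE'' κ (by omega) (by omega))
      rw [show i - 1 + 1 = i from by omega, show j - 1 + 1 = j from by omega] at this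
      exact this
  refine absurd hpos (not_lt.mpr (Finset.sum_nonpos ?_))
  intro κ hκ
  rw [Finset.mem_Icc] at hκ
  rw [slack_eq]
  have hls : ext n c f (i + 1, κ, j) ≤ ext n c f (i, κ, j - 1) := by
    have := mono_desc hf hc (f := f) (i := i) (k := κ) (j := j - 1)
      (isExt_iff.mpr (by omega))
    rw [show j - 1 + 1 = j from by omega] at this
    exact this
  rcases lt_trichotomy κ k with h | h | h
  · have hab' := hbelow κ (by omega) h
    omega
  · subst h
    omega
  · have hsb := SWtight_eq (hSW κ h (by omega))
    have hla : ext n c f (i - 1, κ, j - 1) ≤ ext n c f (i, κ, j - 1) := by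
      have := mono_asc hf hc (f := f) (i := i - 1) (k := κ) (j := j - 1)
        (isExt_iff.mpr (by omega))
      rw [show i - 1 + 1 = i from by omega] at this
      exact this
    omega

/-- Claim C: room below the capacity at the switch node. -/
lemma claimC (hf : Feasible n c f) (hc : ∀ k, 1 ≤ k → k ≤ n → 0 ≤ c k)
    {i j k : ℕ} (hj1 : 1 ≤ j) (hji : j ≤ i) (hin : i ≤ n)
    (hsw : IsSwitchNode n c f i j k) (hpos : 0 < epsSum n c f i j) :
    ext n c f (i, k, j) + 1 ≤ c k := by
  have hA := claimA hf hc hj1 hji hin hsw hpos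
  have := a_le_c hf hj1 hji hin hsw.1 hsw.2.1
  omega

/-- Claim B: the SW-edge of the switch node has slack ≥ 1. -/
lemma claimB (hf : Feasible n c f) (hc : ∀ k, 1 ≤ k → k ≤ n → 0 ≤ c k)
    {i j k : ℕ} (hj1 : 1 ≤ j) (hji : j ≤ i) (hin : i ≤ n)
    (hsw : IsSwitchNode n c f i j k) (hpos : 0 < epsSum n c f i j) :
    ext n c f (i, k, j) + 1 ≤ ext n c f (i + 1, k, j) := by
  rcases Nat.lt_or_ge (i + 1) (k + j) with h | h
  · exact sw_strict hf hc hj1 hji hin hsw h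
  · have hkj : k + j = i + 1 := by have := hsw.1; omega
    have hs : ext n c f (k + j, k, j) = c k := ext_gap1 hj1 (by omega) (by omega)
    rw [hkj] at hs
    have := claimC hf hc hj1 hji hin hsw hpos
    omega

end Claims
section Claim4

variable {n : ℕ} {c : ℕ → ℤ} {f : Node → ℤ}

lemma slack_eq' {i k j : ℕ} :
    slack n c f (i, k, j + 1) =
      (ext n c f (i - 1, k, j) - ext n c f (i, k, j + 1)) -
        (ext n c f (i, k, j) - ext n c f (i + 1, k, j + 1)) := rfl

/-- Claim 4': if the active row has nonpositive slack sum at `j+1`, and the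
(f-)switch of `V_{i-1}(j)` lies strictly left of `k`, then all SE-edges of
`V_{i-1}(j)` left of `k` are tight. -/
lemma claim4' (hf : Feasible n c f) (hc : ∀ k, 1 ≤ k → k ≤ n → 0 ≤ c k)
    {i j k k₁ : ℕ} (hj1 : 1 ≤ j) (hji : j + 1 ≤ i) (hin : i ≤ n)
    (hsw : IsSwitchNode n c f i j k)
    (hk₁ : SwitchAt n c f (i - 1) j k₁) (hk₁k : k₁ < k)
    (hneg : epsSum n c f i (j + 1) ≤ 0) :
    ∀ κ, i ≤ κ + j → κ < k → SEtight n c f (i - 1, κ, j) := by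
  obtain ⟨hk1, hk2, ⟨hSE, hSW⟩, hmin⟩ := hsw
  have hterm : ∀ κ ∈ Finset.Icc (i + 1 - (j + 1)) (n + 1 - (j + 1)),
      0 ≤ slack n c f (i, κ, j + 1) := by
    intro κ hκ
    rw [Finset.mem_Icc] at hκ
    rw [slack_eq']
    have huw : ext n c f (i, κ, j + 1) ≤ ext n c f (i - 1, κ, j) := by
      have := mono_desc hf hc (f := f) (i := i - 1) (k := κ) (j := j)
        (isExt_iff.mpr (by omega))
      rw [show i - 1 + 1 = i from by omega] at this
      exact this
    have htw : ext n c f (i, κ, j + 1) ≤ ext n c f (i + 1, κ, j + 1) :=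
      mono_asc hf hc (isExt_iff.mpr (by omega))
    rcases Nat.lt_or_ge κ k with h | h
    · -- left of the switch node: SE-tightness at row j gives b = t
      have hbt : ext n c f (i, κ, j) = ext n c f (i + 1, κ, j + 1) := by
        rcases Nat.lt_or_ge (κ + j) (i + 1) with h2 | h2
        · -- κ + j = i : boundary column, both values are c κ
          have hb : ext n c f (κ + j, κ, j) = c κ := ext_gap1 hj1 (by omega) (by omega)
          have ht : ext n c f (κ + (j + 1), κ, j + 1) = c κ :=
            ext_gap1 (by omega) (by omega) (by omega)
          rw [show κ + j = i from by omega] at hb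
          rw [show κ + (j + 1) = i + 1 from by omega] at ht
          omega
        · exact SEtight_eq (hSE κ (by omega) h)
      omega
    · -- right of (or at) the switch node: SW-tightness of V_{i-1}(j) gives b = u
      have hbu := SWtight_eq (hk₁.2 κ (by omega) (by omega))
      rw [show i - 1 + 1 = i from by omega] at hbu
      omega
  have hzero : ∀ κ ∈ Finset.Icc (i + 1 - (j + 1)) (n + 1 - (j + 1)),
      slack n c f (i, κ, j + 1) = 0 := by
    rw [← Finset.sum_eq_zero_iff_of_nonneg hterm]
    have hge : (0:ℤ) ≤ ∑ κ ∈ Finset.Icc (i + 1 - (j + 1)) (n + 1 - (j + 1)),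
        slack n c f (i, κ, j + 1) := Finset.sum_nonneg hterm
    have hneg' : (∑ κ ∈ Finset.Icc (i + 1 - (j + 1)) (n + 1 - (j + 1)),
        slack n c f (i, κ, j + 1)) ≤ 0 := hneg
    omega
  intro κ hκ1 hκ2
  have hκS : κ ∈ Finset.Icc (i + 1 - (j + 1)) (n + 1 - (j + 1)) := by
    rw [Finset.mem_Icc]; omega
  have h0 := hzero κ hκS
  rw [slack_eq'] at h0
  have hbt : ext n c f (i, κ, j) = ext n c f (i + 1, κ, j + 1) := by
    rcases Nat.lt_or_ge (κ + j) (i + 1) with h2 | h2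
    · have hb : ext n c f (κ + j, κ, j) = c κ := ext_gap1 hj1 (by omega) (by omega)
      have ht : ext n c f (κ + (j + 1), κ, j + 1) = c κ :=
        ext_gap1 (by omega) (by omega) (by omega)
      rw [show κ + j = i from by omega] at hb
      rw [show κ + (j + 1) = i + 1 from by omega] at ht
      omega
    · exact SEtight_eq (hSE κ (by omega) hκ2)
  have : ext n c f (i - 1, κ, j) = ext n c f (i, κ, j + 1) := by omega
  have hres : ext n c f (i - 1, κ, j) = ext n c f (i - 1 + 1, κ, j + 1) := by
    rw [show i - 1 + 1 = i from by omega]; exact this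
  exact SEtight_of_eq hres

end Claim4
section Update

variable {n : ℕ} {c : ℕ → ℤ} {f : Node → ℤ}

lemma mk_ne_mk {a1 a2 a3 b1 b2 b3 : ℕ} (h : ¬ (a1 = b1 ∧ a2 = b2 ∧ a3 = b3)) :
    ((a1, a2, a3) : Node) ≠ (b1, b2, b3) := by
  intro hh
  injection hh with h1 h2
  injection h2 with h3 h4
  exact h ⟨h1, h3, h4⟩

lemma SEtight_update {v : Node} (hv : IsNode n v) {x1 x2 x3 : ℕ}
    (h1 : ((x1, x2, x3) : Node) ≠ v) (h2 : ((x1 + 1, x2, x3 + 1) : Node) ≠ v) :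
    SEtight n c (Function.update f v (f v + 1)) (x1, x2, x3) ↔
      SEtight n c f (x1, x2, x3) := by
  unfold SEtight dP
  rw [show seNode ((x1, x2, x3) : Node) = (x1 + 1, x2, x3 + 1) from rfl,
    ext_update hv, ext_update hv, if_neg h1, if_neg h2]

lemma SWtight_update {v : Node} (hv : IsNode n v) {x1 x2 x3 : ℕ}
    (h1 : ((x1, x2, x3) : Node) ≠ v) (h2 : ((x1 + 1, x2, x3) : Node) ≠ v) :
    SWtight n c (Function.update f v (f v + 1)) (x1, x2, x3) ↔
      SWtight n c f (x1, x2, x3) := by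
  unfold SWtight dP
  rw [show swNode ((x1, x2, x3) : Node) = (x1 + 1, x2, x3) from rfl,
    ext_update hv, ext_update hv, if_neg h2, if_neg h1]

lemma update_feasible (hf : Feasible n c f) (hc : ∀ k, 1 ≤ k → k ≤ n → 0 ≤ c k)
    {i j k : ℕ} (hj1 : 1 ≤ j) (hji : j ≤ i) (hin : i ≤ n)
    (hk : IsSwitchNode n c f i j k)
    (hpos : 0 < epsSum n c f i j)
    (hneg : j < i → epsSum n c f i (j + 1) ≤ 0) :
    Feasible n c (Function.update f (i, k, j) (f (i, k, j) + 1)) := by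
  have hkr1 := hk.1
  have hkr2 := hk.2.1
  have hv : IsNode n (i, k, j) := isNode_iff.mpr (by omega)
  have hA := claimA hf hc hj1 hji hin hk hpos
  have hB := claimB hf hc hj1 hji hin hk hpos
  have hC := claimC hf hc hj1 hji hin hk hpos
  rw [ext_node hv] at hA hB hC
  refine ⟨?_, ?_, ?_, ?_⟩
  · -- edge monotonicity
    rintro ⟨u1, u2, u3⟩ w ⟨hnu, hnw, hstep⟩
    rw [Function.update_apply, Function.update_apply]
    by_cases hw : w = (i, k, j)
    · subst hw
      by_cases hu : ((u1, u2, u3) : Node) = (i, k, j)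
      · rw [if_pos hu, if_pos rfl]; omega
      · rw [if_neg hu, if_pos rfl]
        rcases hstep with ⟨e1, e2, e3⟩ | ⟨e1, e2, e3⟩
        · -- ascending edge into the switch node: use claim B
          simp only at e1 e2 e3
          subst e1; subst e2
          rw [e3] at hnu ⊢
          rw [ext_node hnu] at hB
          omega
        · -- descending edge into the switch node: use claim A
          simp only at e1 e2 e3
          subst e1
          have h2 : u3 = j - 1 := by omega
          have h3 : u1 = i - 1 := by omega
          rw [h2, h3] at hnu ⊢
          rw [ext_node hnu] at hA
          omega
    · rw [if_neg hw]
      by_cases hu : ((u1, u2, u3) : Node) = (i, k, j)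
      · rw [if_pos hu]
        have := hf.1 _ _ ⟨hnu, hnw, hstep⟩
        rw [hu] at this
        omega
      · rw [if_neg hu]
        exact hf.1 _ _ ⟨hnu, hnw, hstep⟩
  · -- value bounds
    intro x hx
    rw [Function.update_apply]
    by_cases hxv : x = (i, k, j)
    · rw [if_pos hxv, hxv]
      have := hf.2.1 _ hv
      constructor
      · omega
      · exact hC
    · rw [if_neg hxv]
      exact hf.2.1 x hx
  · -- switch conditions
    intro i' j' h1' h2' h3'
    obtain ⟨k₀, hr1, hr2, hsw'⟩ := hf.2.2.1 i' j' h1' h2' h3'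
    by_cases hc1 : i' = i ∧ j' = j
    · obtain ⟨rfl, rfl⟩ := hc1
      refine ⟨k, hkr1, hkr2, ?_, ?_⟩
      · intro κ hκ1 hκ2
        exact (SEtight_update hv (mk_ne_mk (by omega)) (mk_ne_mk (by omega))).mpr
          (hk.2.2.1.1 κ hκ1 hκ2)
      · intro κ hκ1 hκ2
        exact (SWtight_update hv (mk_ne_mk (by omega)) (mk_ne_mk (by omega))).mpr
          (hk.2.2.1.2 κ hκ1 hκ2)
    · by_cases hc2 : i' + 1 = i ∧ j' + 1 = j
      · obtain ⟨e1, e2⟩ := hc2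
        refine ⟨k₀, hr1, hr2, ?_, ?_⟩
        · intro κ hκ1 hκ2
          have hSEf := hsw'.1 κ hκ1 hκ2
          have hκk : κ ≠ k := by
            intro hkk
            subst hkk
            have hteq := SEtight_eq hSEf
            rw [e1, e2] at hteq
            rw [show i - 1 = i' from by omega, show j - 1 = j' from by omega] at hA
            rw [ext_node hv] at hteq
            omega
          exact (SEtight_update hv (mk_ne_mk (by omega))
            (mk_ne_mk (fun hcon => hκk hcon.2.1))).mpr hSEf
        · intro κ hκ1 hκ2
          exact (SWtight_update hv (mk_ne_mk (by omega)) (mk_ne_mk (by omega))).mpr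
            (hsw'.2 κ hκ1 hκ2)
      · by_cases hc3 : i' + 1 = i ∧ j' = j
        · obtain ⟨e1, e2⟩ := hc3
          have hjlt : j < i := by omega
          rcases Nat.lt_or_ge k₀ k with hlt | hge
          · -- the f-witness is left of k: use claim 4'
            have hsw'' : SwitchAt n c f (i - 1) j k₀ := by
              rw [show i - 1 = i' from by omega, ← e2]; exact hsw'
            have h4' := claim4' hf hc hj1 (by omega) hin hk hsw'' hlt (hneg hjlt)
            refine ⟨k, by omega, by omega, ?_, ?_⟩
            · intro κ hκ1 hκ2
              have hSEf := h4' κ (by omega) hκ2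
              rw [show i - 1 = i' from by omega, ← e2] at hSEf
              exact (SEtight_update hv (mk_ne_mk (by omega))
                (mk_ne_mk (by omega))).mpr hSEf
            · intro κ hκ1 hκ2
              have hSWf := hsw'.2 κ (by omega) hκ2
              exact (SWtight_update hv (mk_ne_mk (by omega))
                (mk_ne_mk (by omega))).mpr hSWf
          · -- the f-witness is at or right of k: reuse it
            refine ⟨k₀, hr1, hr2, ?_, ?_⟩
            · intro κ hκ1 hκ2
              exact (SEtight_update hv (mk_ne_mk (by omega))
                (mk_ne_mk (by omega))).mpr (hsw'.1 κ hκ1 hκ2)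
            · intro κ hκ1 hκ2
              exact (SWtight_update hv (mk_ne_mk (by omega))
                (mk_ne_mk (by omega))).mpr (hsw'.2 κ hκ1 hκ2)
        · -- generic multinode: nothing touches the switch node
          refine ⟨k₀, hr1, hr2, ?_, ?_⟩
          · intro κ hκ1 hκ2
            exact (SEtight_update hv
              (mk_ne_mk (fun hcon => hc1 ⟨hcon.1, hcon.2.2⟩))
              (mk_ne_mk (fun hcon => hc2 ⟨hcon.1, hcon.2.2⟩))).mpr (hsw'.1 κ hκ1 hκ2)
          · intro κ hκ1 hκ2
            exact (SWtight_update hv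
              (mk_ne_mk (fun hcon => hc1 ⟨hcon.1, hcon.2.2⟩))
              (mk_ne_mk (fun hcon => hc3 ⟨hcon.1, hcon.2.2⟩))).mpr (hsw'.2 κ hκ1 hκ2)
  · -- vanishing off G
    intro x hx
    rw [Function.update_apply, if_neg (fun hxv => hx (by rw [hxv]; exact hv))]
    exact hf.2.2.2 x hx

end Update
section Red

variable {n : ℕ} {c : ℕ → ℤ} {f : Node → ℤ}

lemma redSlack_nonneg {i q : ℕ} (hq : 1 ≤ q) : 0 ≤ redSlack n c f i q := by
  unfold redSlack
  rw [dif_pos (Finset.nonempty_Icc.mpr hq)]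
  exact le_max_left _ _

lemma redSlack_pos_forall {i j : ℕ} (hj : 1 ≤ j) (h : 0 < redSlack n c f i j) :
    ∀ p, 1 ≤ p → p ≤ j → 0 < epsInt n c f i p j := by
  intro p hp1 hp2
  unfold redSlack at h
  rw [dif_pos (Finset.nonempty_Icc.mpr hj)] at h
  have h2 : 0 < (Finset.Icc 1 j).inf' (Finset.nonempty_Icc.mpr hj)
      (fun p => epsInt n c f i p j) := by
    rcases max_cases (0 : ℤ) ((Finset.Icc 1 j).inf' (Finset.nonempty_Icc.mpr hj)
      (fun p => epsInt n c f i p j)) with ⟨he, hle⟩ | ⟨he, hle⟩ <;> omega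
  calc (0 : ℤ) < _ := h2
    _ ≤ epsInt n c f i p j :=
      Finset.inf'_le _ (Finset.mem_Icc.mpr ⟨hp1, hp2⟩)

lemma redSlack_zero_exists {i j : ℕ} (hj : 1 ≤ j) (h : redSlack n c f i j = 0) :
    ∃ p, 1 ≤ p ∧ p ≤ j ∧ epsInt n c f i p j ≤ 0 := by
  unfold redSlack at h
  rw [dif_pos (Finset.nonempty_Icc.mpr hj)] at h
  obtain ⟨p, hp, hpe⟩ := Finset.exists_mem_eq_inf' (Finset.nonempty_Icc.mpr hj)
    (fun p => epsInt n c f i p j)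
  rw [Finset.mem_Icc] at hp
  refine ⟨p, hp.1, hp.2, ?_⟩
  have : (Finset.Icc 1 j).inf' (Finset.nonempty_Icc.mpr hj)
      (fun p => epsInt n c f i p j) ≤ 0 := by
    rcases max_cases (0 : ℤ) ((Finset.Icc 1 j).inf' (Finset.nonempty_Icc.mpr hj)
      (fun p => epsInt n c f i p j)) with ⟨he, hle⟩ | ⟨he, hle⟩ <;> omega
  omega

lemma epsInt_self {i j : ℕ} : epsInt n c f i j j = epsSum n c f i j := by
  unfold epsInt
  rw [Finset.Icc_self, Finset.sum_singleton]

lemma epsInt_split {i p j : ℕ} (hp : p ≤ j) :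
    epsInt n c f i p (j + 1) = epsInt n c f i p j + epsSum n c f i (j + 1) := by
  unfold epsInt
  exact Finset.sum_Icc_succ_top (by omega) _

end Red
/-- If `f` is feasible and `ε̃_i(j') > 0` for some `j'`, then the
active multinode `V_i(j)` exists, and increasing `f` by one at its switch-node
produces a feasible function (`φ_i(f) ∈ F(c)`). -/
theorem statement12 (n : ℕ) (hn : 1 ≤ n) (c : ℕ → ℤ)
    (hc : ∀ k, 1 ≤ k → k ≤ n → 0 ≤ c k)
    (f : Node → ℤ) (hf : Feasible n c f)
    (i : ℕ) (hi1 : 1 ≤ i) (hi2 : i ≤ n)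
    (happ : ∃ j', 1 ≤ j' ∧ j' ≤ i ∧ 0 < redSlack n c f i j') :
    ∃ j, Active n c f i j ∧
      ∀ k, IsSwitchNode n c f i j k →
        Feasible n c (Function.update f (i, k, j) (f (i, k, j) + 1)) := by
  classical
  set S : Finset ℕ := (Finset.Icc 1 i).filter (fun q => 0 < redSlack n c f i q) with hS
  have hne : S.Nonempty := by
    obtain ⟨j', h1, h2, h3⟩ := happ
    exact ⟨j', by simp [hS, Finset.mem_Icc, h1, h2, h3]⟩
  set j : ℕ := S.max' hne with hj
  obtain ⟨hmem, hjpos⟩ := Finset.mem_filter.mp (S.max'_mem hne)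
  obtain ⟨hj1, hji⟩ := Finset.mem_Icc.mp hmem
  rw [← hj] at hjpos hj1 hji
  have hmax : ∀ q, j < q → q ≤ i → redSlack n c f i q = 0 := by
    intro q hq1 hq2
    by_contra hne0
    have hqpos : 0 < redSlack n c f i q := by
      have := redSlack_nonneg (n := n) (c := c) (f := f) (i := i) (q := q) (by omega)
      omega
    have hqS : q ∈ S :=
      Finset.mem_filter.mpr ⟨Finset.mem_Icc.mpr ⟨by omega, hq2⟩, hqpos⟩
    have := S.le_max' q hqS
    omega
  have hpos : 0 < epsSum n c f i j := by
    have := redSlack_pos_forall hj1 hjpos j hj1 le_rfl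
    rwa [epsInt_self] at this
  have hneg : j < i → epsSum n c f i (j + 1) ≤ 0 := by
    intro hlt
    obtain ⟨p, hp1, hp2, hple⟩ := redSlack_zero_exists (by omega)
      (hmax (j + 1) (by omega) (by omega))
    rcases Nat.lt_or_ge p (j + 1) with hpj | hpj
    · have hsplit := epsInt_split (n := n) (c := c) (f := f) (i := i) (p := p)
        (j := j) (by omega)
      have := redSlack_pos_forall hj1 hjpos p hp1 (by omega)
      omega
    · have hpe : p = j + 1 := by omega
      subst hpe
      rwa [epsInt_self] at hple
  refine ⟨j, ⟨hj1, hji, hjpos, hmax⟩, ?_⟩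
  intro k hk
  exact update_feasible hf hc hj1 hji hi2 hk hpos hneg
end CrystalA
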